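/- Let ℓ ∈ ℕ₀ and 1 ≤ k ≤ 2^ℓ. Let (U^{(i,j)}) for (i,j) = (0,1) and for 1 ≤ i ≤ ℓ, 1 ≤ j ≤ 2^{i-1} be independent random variables with U^{(i,j)} uniformly distributed on the finite set D_{q^{(i)}_ℓ}, where q^{(i)}_ℓ = 2(ℓ+1−i). Put Y^{(i,j)} = (1/σ_{q^{(i)}_ℓ}) · Φ^{-1}(U^{(i,j)}) and V_{k,ℓ} = Δ^{(0,1)}_{k,ℓ}·Y^{(0,1)} + Σ_{i=1}^{ℓ} Σ_{j=1}^{2^{i-1}} Δ^{(i,j)}_{k,ℓ}·Y^{(i,j)}. Then V_{k,ℓ} has mean zero and variance exactly 2^{-ℓ}. -/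

import Mathlib

open MeasureTheory ProbabilityTheory

/-- `Φ`, the cumulative distribution function of the standard normal distribution. -/
noncomputable def stdNormalCDF (y : ℝ) : ℝ := (gaussianReal 0 1 (Set.Iic y)).toReal

/-- `Φ⁻¹`, the inverse of the standard normal CDF (on `(0,1)`). -/
noncomputable def stdNormalCDFInv : ℝ → ℝ := Function.invFun stdNormalCDF

/-- `D_q`, the set of midpoints of the dyadic subintervals of `[0,1]` of length `2^{-q}`. -/
noncomputable def Dq (q : ℕ) : Finset ℝ :=
  Finset.image (fun m : ℕ => (m : ℝ) / 2 ^ q + 1 / 2 ^ (q + 1)) (Finset.range (2 ^ q))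

/-- `σ_q = (2^{-q} Σ_{x ∈ D_q} (Φ⁻¹(x))²)^{1/2}`. -/
noncomputable def sigmaq (q : ℕ) : ℝ :=
  Real.sqrt (((2 : ℝ) ^ q)⁻¹ * ∑ x ∈ Dq q, stdNormalCDFInv x ^ 2)

/-- The Haar functions on `[0,1]`. -/
noncomputable def haar : ℕ → ℕ → ℝ → ℝ
  | 0, _, _ => 1
  | (i + 1), j, t =>
      2 ^ ((i : ℝ) / 2) *
        ((Set.Ico (((j : ℝ) - 1) / 2 ^ i) (((j : ℝ) - 1 / 2) / 2 ^ i)).indicator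
            (fun _ => (1 : ℝ)) t
          - (Set.Ico (((j : ℝ) - 1 / 2) / 2 ^ i) ((j : ℝ) / 2 ^ i)).indicator
            (fun _ => (1 : ℝ)) t)

/-- The Schauder functions `s^{(i,j)}(t) = ∫_0^t h^{(i,j)}(u) du`. -/
noncomputable def schauder (i j : ℕ) (t : ℝ) : ℝ := ∫ u in (0 : ℝ)..t, haar i j u

/-- The Schauder increments `Δ^{(i,j)}_{k,ℓ}`. -/
noncomputable def schauderInc (i j k ℓ : ℕ) : ℝ :=
  schauder i j ((k : ℝ) / 2 ^ ℓ) - schauder i j (((k : ℝ) - 1) / 2 ^ ℓ)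

/-- The index pairs `(i,j)` appearing in the level-`ℓ` Lévy–Ciesielski construction:
`(0,1)` and `(i,j)` with `1 ≤ i ≤ ℓ`, `1 ≤ j ≤ 2^{i-1}`. -/
def ValidPair (ℓ : ℕ) (p : ℕ × ℕ) : Prop :=
  p = (0, 1) ∨ (1 ≤ p.1 ∧ p.1 ≤ ℓ ∧ 1 ≤ p.2 ∧ p.2 ≤ 2 ^ (p.1 - 1))

/-!
Each `Z_p = Φ⁻¹(U_p) / σ_q` is centred because `D_q` is symmetric under `x ↦ 1 - x` and
`Φ⁻¹(1 - x) = -Φ⁻¹(x)`, and has variance one because `σ_q` is exactly the root mean square of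
`Φ⁻¹` over `D_q`. By independence, `V_{k,ℓ} = ∑_p Δ_p Z_p` is centred with variance `∑_p Δ_p²`.
For each level `i ≥ 1` the cell `[(k-1)/2^ℓ, k/2^ℓ]` lies in one half of the support of exactly
one Haar function `h^{(i,j)}`, where it equals `±2^{(i-1)/2}`; hence
`∑_p Δ_p² = 4^{-ℓ} (1 + ∑_{i=1}^{ℓ} 2^{i-1}) = 2^{-ℓ}`.
-/

open Finset

namespace ProbabilityTheory

variable {μ : Measure ℝ} [IsProbabilityMeasure μ]

lemma continuous_cdf [NullSingletonClass μ] : Continuous (cdf μ) := by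
  refine continuous_iff_continuousAt.2 fun x => ?_
  rw [(cdf μ).mono.continuousAt_iff_leftLim_eq_rightLim, StieltjesFunction.rightLim_eq]
  have h := (cdf μ).measure_singleton x
  rw [measure_cdf, measure_singleton, eq_comm, ENNReal.ofReal_eq_zero, sub_nonpos] at h
  exact le_antisymm ((cdf μ).mono.leftLim_le le_rfl) h

lemma strictMono_cdf (hμ : volume ≪ μ) : StrictMono (cdf μ) := by
  intro y z hyz
  have hpos : 0 < μ (Set.Ioc y z) :=
    pos_iff_ne_zero.2 fun h => hyz.not_ge (by simpa using hμ h)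
  rwa [← measure_cdf μ, StieltjesFunction.measure_Ioc, ENNReal.ofReal_pos, sub_pos] at hpos

lemma Ioo_subset_range_cdf [NullSingletonClass μ] : Set.Ioo 0 1 ⊆ Set.range (cdf μ) :=
  fun _ hx => mem_range_of_exists_le_of_exists_ge continuous_cdf
    ((tendsto_cdf_atBot μ).eventually (eventually_le_nhds hx.1)).exists
    ((tendsto_cdf_atTop μ).eventually (eventually_ge_nhds hx.2)).exists

end ProbabilityTheory

instance nullSingletonClass_gaussianReal_zero_one : NullSingletonClass (gaussianReal 0 1) :=
  nullSingletonClass_gaussianReal one_ne_zero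

lemma stdNormalCDF_eq_cdf : stdNormalCDF = cdf (gaussianReal 0 1) := by
  ext y
  rw [cdf_eq_real, measureReal_def, stdNormalCDF]

lemma strictMono_stdNormalCDF : StrictMono stdNormalCDF :=
  stdNormalCDF_eq_cdf ▸ strictMono_cdf (gaussianReal_absolutelyContinuous' 0 one_ne_zero)

lemma stdNormalCDF_neg (y : ℝ) : stdNormalCDF (-y) = 1 - stdNormalCDF y := by
  have hsymm : (gaussianReal 0 1).map (fun x => -x) = gaussianReal 0 1 := by
    simpa using gaussianReal_map_neg (μ := 0) (v := 1)
  have hIic : gaussianReal 0 1 (Set.Iic (-y)) = gaussianReal 0 1 (Set.Ici y) := by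
    conv_lhs => rw [← hsymm]
    rw [Measure.map_apply measurable_neg measurableSet_Iic, Set.neg_preimage, Set.neg_Iic, neg_neg]
  rw [stdNormalCDF, stdNormalCDF, hIic, measure_congr Ioi_ae_eq_Ici.symm, ← Set.compl_Iic,
    prob_compl_eq_one_sub measurableSet_Iic, ENNReal.toReal_sub_of_le prob_le_one (by simp)]
  simp

lemma stdNormalCDF_zero : stdNormalCDF 0 = 1 / 2 := by
  linarith [neg_zero (G := ℝ) ▸ stdNormalCDF_neg 0]

lemma stdNormalCDFInv_stdNormalCDF (y : ℝ) : stdNormalCDFInv (stdNormalCDF y) = y :=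
  Function.leftInverse_invFun strictMono_stdNormalCDF.injective y

lemma stdNormalCDF_stdNormalCDFInv {x : ℝ} (hx : x ∈ Set.Ioo 0 1) :
    stdNormalCDF (stdNormalCDFInv x) = x :=
  Function.invFun_eq (stdNormalCDF_eq_cdf ▸ Ioo_subset_range_cdf hx)

lemma stdNormalCDFInv_one_sub {x : ℝ} (hx : x ∈ Set.Ioo 0 1) :
    stdNormalCDFInv (1 - x) = -stdNormalCDFInv x := by
  rw [← stdNormalCDF_stdNormalCDFInv hx, ← stdNormalCDF_neg, stdNormalCDFInv_stdNormalCDF,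
    stdNormalCDF_stdNormalCDFInv hx]

lemma stdNormalCDFInv_eq_zero_iff {x : ℝ} (hx : x ∈ Set.Ioo 0 1) :
    stdNormalCDFInv x = 0 ↔ x = 1 / 2 := by
  rw [← stdNormalCDF_zero, ← stdNormalCDF_stdNormalCDFInv hx,
    strictMono_stdNormalCDF.injective.eq_iff, stdNormalCDF_stdNormalCDFInv hx]

lemma mem_Dq {q : ℕ} {x : ℝ} :
    x ∈ Dq q ↔ ∃ m : ℕ, m < 2 ^ q ∧ (m : ℝ) / 2 ^ q + 1 / 2 ^ (q + 1) = x := by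
  simp [Dq]

lemma Dq_subset_Ioo {q : ℕ} {x : ℝ} (hx : x ∈ Dq q) : x ∈ Set.Ioo 0 1 := by
  obtain ⟨m, hm, rfl⟩ := mem_Dq.1 hx
  have hm' : (m : ℝ) + 1 ≤ 2 ^ q := by exact_mod_cast hm
  refine ⟨by positivity, ?_⟩
  rw [pow_succ, div_add_div _ _ (by positivity) (by positivity), div_lt_one (by positivity)]
  nlinarith [pow_pos (two_pos (α := ℝ)) q]

lemma one_sub_mem_Dq {q : ℕ} {x : ℝ} (hx : x ∈ Dq q) : 1 - x ∈ Dq q := by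
  obtain ⟨m, hm, rfl⟩ := mem_Dq.1 hx
  refine mem_Dq.2 ⟨2 ^ q - 1 - m, by omega, ?_⟩
  rw [Nat.cast_sub (by omega), Nat.cast_sub Nat.one_le_two_pow]
  field_simp
  push_cast
  ring

lemma card_Dq (q : ℕ) : #(Dq q) = 2 ^ q := by
  refine (Finset.card_image_of_injective _ fun a b hab => ?_).trans (card_range _)
  simpa using hab

lemma inv_two_pow_succ_mem_Dq (q : ℕ) : 1 / 2 ^ (q + 1) ∈ Dq q :=
  mem_Dq.2 ⟨0, Nat.two_pow_pos q, by simp⟩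

lemma sum_stdNormalCDFInv_Dq (q : ℕ) : ∑ x ∈ Dq q, stdNormalCDFInv x = 0 := by
  refine sum_involution (fun x _ => 1 - x) (fun x hx => ?_) (fun x hx hne hfix => hne ?_)
    (fun x hx => one_sub_mem_Dq hx) (fun x _ => sub_sub_cancel 1 x)
  · rw [stdNormalCDFInv_one_sub (Dq_subset_Ioo hx), add_neg_cancel]
  · rw [(stdNormalCDFInv_eq_zero_iff (Dq_subset_Ioo hx)).2 (by linarith)]

lemma sigmaq_sq (q : ℕ) : sigmaq q ^ 2 = (2 ^ q)⁻¹ * ∑ x ∈ Dq q, stdNormalCDFInv x ^ 2 :=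
  Real.sq_sqrt (by positivity)

lemma sigmaq_ne_zero {q : ℕ} (hq : q ≠ 0) : sigmaq q ≠ 0 := by
  have hx := inv_two_pow_succ_mem_Dq q
  have hne : stdNormalCDFInv (1 / 2 ^ (q + 1)) ≠ 0 := by
    rw [Ne, stdNormalCDFInv_eq_zero_iff (Dq_subset_Ioo hx), one_div, one_div, inv_inj]
    simpa using (pow_lt_pow_right₀ one_lt_two (show 1 < q + 1 by omega)).ne'
  rw [← pow_ne_zero_iff two_ne_zero, sigmaq_sq]
  exact mul_ne_zero (by positivity) (sum_pos' (fun x _ => sq_nonneg _) ⟨_, hx, by positivity⟩).ne'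

section UniformOnFinset

variable {α : Type*} [MeasurableSpace α] [MeasurableSingletonClass α] (s : Finset α)

lemma ae_mem_uniformOn_finset : ∀ᵐ x ∂uniformOn (s : Set α), x ∈ s := by
  rw [ae_iff, uniformOn_eq_zero_iff s.finite_toSet]
  ext x
  simp

lemma restrict_uniformOn_finset : (uniformOn (s : Set α)).restrict s = uniformOn (s : Set α) :=
  Measure.restrict_eq_self_of_ae_mem (ae_mem_uniformOn_finset s)

lemma aemeasurable_uniformOn_finset {β : Type*} [MeasurableSpace β] (f : α → β) :
    AEMeasurable f (uniformOn (s : Set α)) :=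
  restrict_uniformOn_finset s ▸
    aemeasurable_restrict_of_measurable_subtype s.measurableSet (measurable_of_finite _)

lemma memLp_uniformOn_finset (f : α → ℝ) (p : ENNReal) : MemLp f p (uniformOn (s : Set α)) := by
  refine .of_bound (aemeasurable_uniformOn_finset s f).aestronglyMeasurable (∑ x ∈ s, ‖f x‖) ?_
  filter_upwards [ae_mem_uniformOn_finset s] with x hx
  exact single_le_sum (f := fun x => ‖f x‖) (fun _ _ => norm_nonneg _) hx

lemma integral_uniformOn_finset (f : α → ℝ) :
    ∫ x, f x ∂uniformOn (s : Set α) = (#s : ℝ)⁻¹ * ∑ x ∈ s, f x := by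
  classical
  rw [← restrict_uniformOn_finset, setIntegral_finset s, mul_sum]
  · refine sum_congr rfl fun x hx => ?_
    rw [measureReal_def, ← coe_singleton, uniformOn_apply_finset,
      Finset.inter_singleton_of_mem hx]
    simp
  · exact (memLp_uniformOn_finset s f 1).integrable le_rfl |>.integrableOn

end UniformOnFinset

namespace ProbabilityTheory.HasLaw

variable {Ω α : Type*} [MeasurableSpace Ω] [MeasurableSpace α] [MeasurableSingletonClass α]
  {P : Measure Ω} {U : Ω → α} {s : Finset α}

lemma integral_comp_uniformOn_finset (hU : HasLaw U (uniformOn (s : Set α)) P) (f : α → ℝ) :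
    ∫ ω, f (U ω) ∂P = (#s : ℝ)⁻¹ * ∑ x ∈ s, f x := by
  rw [← integral_uniformOn_finset]
  exact hU.integral_comp (aemeasurable_uniformOn_finset s f).aestronglyMeasurable

lemma memLp_comp_uniformOn_finset (hU : HasLaw U (uniformOn (s : Set α)) P) (f : α → ℝ)
    (p : ENNReal) : MemLp (fun ω => f (U ω)) p P := by
  have hf := memLp_uniformOn_finset s f p
  rw [← hU.map_eq] at hf
  exact (memLp_map_measure_iff hf.aestronglyMeasurable hU.aemeasurable).1 hf

end ProbabilityTheory.HasLaw

noncomputable def normalizedQuantile (q : ℕ) (x : ℝ) : ℝ := (sigmaq q)⁻¹ * stdNormalCDFInv x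

lemma sum_normalizedQuantile_Dq (q : ℕ) : ∑ x ∈ Dq q, normalizedQuantile q x = 0 := by
  simp only [normalizedQuantile, ← mul_sum, sum_stdNormalCDFInv_Dq, mul_zero]

lemma sum_normalizedQuantile_sq_Dq {q : ℕ} (hq : q ≠ 0) :
    ∑ x ∈ Dq q, normalizedQuantile q x ^ 2 = 2 ^ q := by
  have hσ₀ := sigmaq_ne_zero hq
  have hS : ∑ x ∈ Dq q, stdNormalCDFInv x ^ 2 = sigmaq q ^ 2 * 2 ^ q := by
    rw [sigmaq_sq]; field_simp
  simp only [normalizedQuantile, mul_pow]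
  rw [← mul_sum, hS]
  field_simp

namespace ProbabilityTheory.HasLaw

variable {Ω : Type*} [MeasurableSpace Ω] {P : Measure Ω} {U : Ω → ℝ} {q : ℕ}

lemma integral_normalizedQuantile (hU : HasLaw U (uniformOn (Dq q : Set ℝ)) P) :
    ∫ ω, normalizedQuantile q (U ω) ∂P = 0 := by
  rw [hU.integral_comp_uniformOn_finset, sum_normalizedQuantile_Dq, mul_zero]

lemma variance_normalizedQuantile (hU : HasLaw U (uniformOn (Dq q : Set ℝ)) P) (hq : q ≠ 0) :
    Var[fun ω => normalizedQuantile q (U ω); P] = 1 := by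
  rw [variance_of_integral_eq_zero
      (hU.memLp_comp_uniformOn_finset _ 1).aestronglyMeasurable.aemeasurable
      hU.integral_normalizedQuantile,
    hU.integral_comp_uniformOn_finset (fun x => normalizedQuantile q x ^ 2),
    sum_normalizedQuantile_sq_Dq hq, card_Dq]
  push_cast
  exact inv_mul_cancel₀ (by positivity)

end ProbabilityTheory.HasLaw

lemma ProbabilityTheory.variance_sum_const_mul {Ω ι : Type*} [MeasurableSpace Ω] {P : Measure Ω}
    {s : Finset ι} {X : ι → Ω → ℝ} (c : ι → ℝ) (hX : ∀ i ∈ s, MemLp (X i) 2 P)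
    (hind : (s : Set ι).Pairwise fun i j => X i ⟂ᵢ[P] X j) :
    Var[fun ω => ∑ i ∈ s, c i * X i ω; P] = ∑ i ∈ s, c i ^ 2 * Var[X i; P] := by
  have hsum : (fun ω => ∑ i ∈ s, c i * X i ω) = ∑ i ∈ s, fun ω => c i * X i ω := by
    ext ω; simp
  rw [hsum, IndepFun.variance_sum (fun i hi => (hX i hi).const_mul (c i)) fun i hi j hj hij =>
    (hind hi hj hij).comp (measurable_const_mul (c i)) (measurable_const_mul (c j))]
  exact sum_congr rfl fun i _ => variance_const_mul _ _ _

lemma intervalIntegral_indicator_Ico_grid {N : ℝ} (hN : 0 < N) (A B k : ℕ) :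
    ∫ u in ((k : ℝ) - 1) / N..k / N, (Set.Ico (A / N) (B / N)).indicator (fun _ => (1 : ℝ)) u
      = if A < k ∧ k ≤ B then N⁻¹ else 0 := by
  have hle : ((k : ℝ) - 1) / N ≤ k / N := by gcongr; linarith
  have hcell : Set.EqOn ((Set.Ico (A / N) (B / N)).indicator (fun _ => (1 : ℝ)))
      (fun _ => if A < k ∧ k ≤ B then 1 else 0) (Set.Ioo (((k : ℝ) - 1) / N) (k / N)) := by
    rintro u ⟨hu₁, hu₂⟩
    rw [div_lt_iff₀ hN] at hu₁
    rw [lt_div_iff₀ hN] at hu₂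
    simp only [Set.indicator_apply, Set.mem_Ico, div_le_iff₀ hN, lt_div_iff₀ hN]
    congr 1
    refine propext ⟨fun ⟨hA, hB⟩ => ?_, fun ⟨hA, hB⟩ => ?_⟩
    · have hB' : (k : ℝ) < B + 1 := by linarith
      exact ⟨by exact_mod_cast hA.trans_lt hu₂, Nat.lt_succ_iff.1 (by exact_mod_cast hB')⟩
    · have hA' : (A : ℝ) + 1 ≤ k := by exact_mod_cast hA
      have hB' : (k : ℝ) ≤ B := by exact_mod_cast hB
      constructor <;> linarith
  rw [intervalIntegral.integral_congr_Ioo_of_le hle hcell, intervalIntegral.integral_const,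
    smul_eq_mul]
  split_ifs
  · field_simp; ring
  · simp

lemma haar_succ_eq_grid {i j ℓ : ℕ} (hi : i < ℓ) (hj : 1 ≤ j) :
    haar (i + 1) j = fun u => 2 ^ ((i : ℝ) / 2) *
      ((Set.Ico (((2 * (j - 1) * 2 ^ (ℓ - (i + 1)) : ℕ) : ℝ) / 2 ^ ℓ)
          (((2 * (j - 1) + 1) * 2 ^ (ℓ - (i + 1)) : ℕ) / 2 ^ ℓ)).indicator (fun _ => 1) u
        - (Set.Ico ((((2 * (j - 1) + 1) * 2 ^ (ℓ - (i + 1)) : ℕ) : ℝ) / 2 ^ ℓ)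
          ((2 * j * 2 ^ (ℓ - (i + 1)) : ℕ) / 2 ^ ℓ)).indicator (fun _ => 1) u) := by
  have hℓ : (2 : ℝ) ^ ℓ = 2 ^ i * 2 * 2 ^ (ℓ - (i + 1)) := by
    rw [mul_assoc, ← pow_succ', ← pow_add]; congr 1; omega
  have hM : (0 : ℝ) < 2 ^ (ℓ - (i + 1)) := by positivity
  have hcast : ((j - 1 : ℕ) : ℝ) = j - 1 := by rw [Nat.cast_sub hj, Nat.cast_one]
  funext u
  simp only [haar]
  congr 4 <;> push_cast [hcast] <;> rw [hℓ] <;> field_simp <;> ring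

lemma intervalIntegrable_indicator_Ico_one (a b c d : ℝ) :
    IntervalIntegrable ((Set.Ico c d).indicator fun _ => (1 : ℝ)) volume a b := by
  constructor <;> exact (integrable_const 1).indicator measurableSet_Ico

lemma rpow_div_two_sq (i : ℕ) : ((2 : ℝ) ^ ((i : ℝ) / 2)) ^ 2 = 2 ^ i := by
  rw [← Real.rpow_natCast, ← Real.rpow_mul zero_le_two]
  norm_num

lemma schauderInc_succ_sq {i j k ℓ : ℕ} (hi : i < ℓ) (hj : 1 ≤ j) (hk : 1 ≤ k) :
    schauderInc (i + 1) j k ℓ ^ 2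
      = if j = (k - 1) / 2 ^ (ℓ - i) + 1 then 2 ^ i * ((2 ^ ℓ)⁻¹) ^ 2 else 0 := by
  set M := 2 ^ (ℓ - (i + 1)) with hM
  have hinc : schauderInc (i + 1) j k ℓ = 2 ^ ((i : ℝ) / 2) *
      ((if 2 * (j - 1) * M < k ∧ k ≤ (2 * (j - 1) + 1) * M then ((2 : ℝ) ^ ℓ)⁻¹ else 0)
        - if (2 * (j - 1) + 1) * M < k ∧ k ≤ 2 * j * M then ((2 : ℝ) ^ ℓ)⁻¹ else 0) := by
    have hint : ∀ a b : ℝ, IntervalIntegrable (haar (i + 1) j) volume a b :=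
      fun a b => haar_succ_eq_grid hi hj ▸ ((intervalIntegrable_indicator_Ico_one _ _ _ _).sub
        (intervalIntegrable_indicator_Ico_one _ _ _ _)).const_mul _
    rw [schauderInc, schauder, schauder, intervalIntegral.integral_interval_sub_left (hint _ _)
      (hint _ _), haar_succ_eq_grid hi hj, intervalIntegral.integral_const_mul,
      intervalIntegral.integral_sub (intervalIntegrable_indicator_Ico_one _ _ _ _)
        (intervalIntegrable_indicator_Ico_one _ _ _ _),
      intervalIntegral_indicator_Ico_grid (by positivity),
      intervalIntegral_indicator_Ico_grid (by positivity)]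
  have hblock : j = (k - 1) / 2 ^ (ℓ - i) + 1 ↔ 2 * (j - 1) * M < k ∧ k ≤ 2 * j * M := by
    obtain ⟨j, rfl⟩ : ∃ j', j = j' + 1 := ⟨j - 1, by omega⟩
    have h2M : 2 ^ (ℓ - i) = 2 * M := by rw [hM, ← pow_succ']; congr 1; omega
    have hMpos : 0 < M := by positivity
    rw [h2M, Nat.add_sub_cancel, eq_comm, Nat.add_right_cancel_iff, Nat.div_eq_iff (by omega),
      show 2 * j * M = j * (2 * M) by ring, show 2 * (j + 1) * M = j * (2 * M) + 2 * M by ring]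
    omega
  have hmid : (2 * (j - 1) + 1) * M = 2 * (j - 1) * M + M := by ring
  have hend : 2 * j * M = 2 * (j - 1) * M + 2 * M := by
    nth_rewrite 1 [← Nat.sub_add_cancel hj]; ring
  rw [hinc, mul_pow, rpow_div_two_sq]
  simp only [hblock, hmid, hend]
  generalize 2 * (j - 1) * M = a
  split_ifs <;> first | omega | ring

lemma sum_schauderInc_succ_sq {i k ℓ : ℕ} (hi : i < ℓ) (hk₁ : 1 ≤ k) (hk₂ : k ≤ 2 ^ ℓ) :
    ∑ j ∈ Icc 1 (2 ^ i), schauderInc (i + 1) j k ℓ ^ 2 = 2 ^ i * ((2 ^ ℓ)⁻¹) ^ 2 := by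
  have hblock : (k - 1) / 2 ^ (ℓ - i) + 1 ∈ Icc 1 (2 ^ i) := by
    have : (k - 1) / 2 ^ (ℓ - i) < 2 ^ i := by
      rw [Nat.div_lt_iff_lt_mul (by positivity), ← pow_add, Nat.add_sub_cancel' hi.le]
      omega
    exact mem_Icc.2 ⟨le_add_self, this⟩
  rw [sum_congr rfl fun j hj => schauderInc_succ_sq hi (mem_Icc.1 hj).1 hk₁, sum_ite_eq',
    if_pos hblock]

lemma schauderInc_zero (j k ℓ : ℕ) : schauderInc 0 j k ℓ = (2 ^ ℓ)⁻¹ := by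
  simp only [schauderInc, schauder, haar, intervalIntegral.integral_const, smul_eq_mul, mul_one]
  ring

lemma sum_sq_schauderInc {k ℓ : ℕ} (hk₁ : 1 ≤ k) (hk₂ : k ≤ 2 ^ ℓ) :
    schauderInc 0 1 k ℓ ^ 2
      + ∑ i ∈ Icc 1 ℓ, ∑ j ∈ Icc 1 (2 ^ (i - 1)), schauderInc i j k ℓ ^ 2 = (2 ^ ℓ)⁻¹ := by
  have hlevel : ∀ i ∈ Icc 1 ℓ, ∑ j ∈ Icc 1 (2 ^ (i - 1)), schauderInc i j k ℓ ^ 2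
      = 2 ^ (i - 1) * ((2 ^ ℓ)⁻¹) ^ 2 := by
    intro i hi
    obtain ⟨i, rfl⟩ : ∃ i', i = i' + 1 := ⟨i - 1, by grind⟩
    exact sum_schauderInc_succ_sq (by grind) hk₁ hk₂
  have hgeom : ∑ i ∈ Icc 1 ℓ, (2 : ℝ) ^ (i - 1) = 2 ^ ℓ - 1 := by
    rw [← Finset.Ico_add_one_right_eq_Icc, sum_Ico_eq_sum_range]
    simp only [Nat.add_sub_cancel, Nat.add_sub_cancel_left]
    rw [geom_sum_eq (by norm_num)]
    ring
  rw [sum_congr rfl hlevel, ← sum_mul, hgeom, schauderInc_zero]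
  field_simp
  ring

def validPairs (ℓ : ℕ) : Finset (ℕ × ℕ) :=
  insert (0, 1) ((Icc 1 ℓ).biUnion fun i => {i} ×ˢ Icc 1 (2 ^ (i - 1)))

lemma mem_validPairs {ℓ : ℕ} {p : ℕ × ℕ} : p ∈ validPairs ℓ ↔ ValidPair ℓ p := by
  simp only [validPairs, ValidPair, mem_insert, mem_biUnion, mem_product, mem_singleton, mem_Icc]
  grind

lemma sum_validPairs {M : Type*} [AddCommMonoid M] (ℓ : ℕ) (f : ℕ → ℕ → M) :
    ∑ p ∈ validPairs ℓ, f p.1 p.2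
      = f 0 1 + ∑ i ∈ Icc 1 ℓ, ∑ j ∈ Icc 1 (2 ^ (i - 1)), f i j := by
  rw [validPairs, sum_insert (by simp),
    sum_finset_product' _ (Icc 1 ℓ) (fun i => Icc 1 (2 ^ (i - 1))) fun p => by simp; grind]

theorem randomBitIncrement_mean_variance_general
    {Ω : Type*} [MeasurableSpace Ω] (P : Measure Ω)
    (ℓ k : ℕ) (hk1 : 1 ≤ k) (hk2 : k ≤ 2 ^ ℓ)
    (U : ℕ → ℕ → Ω → ℝ)
    (hmeas : ∀ i j, ValidPair ℓ (i, j) → Measurable (U i j))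
    (hunif : ∀ i j, ValidPair ℓ (i, j) →
      Measure.map (U i j) P = uniformOn (Dq (2 * (ℓ + 1 - i)) : Set ℝ))
    (hindep : iIndepFun
      (fun p : { p : ℕ × ℕ // ValidPair ℓ p } => U p.1.1 p.1.2) P)
    (Y : ℕ → ℕ → Ω → ℝ)
    (hY : ∀ i j, Y i j = fun ω => (sigmaq (2 * (ℓ + 1 - i)))⁻¹ * stdNormalCDFInv (U i j ω))
    (V : Ω → ℝ)
    (hV : V = fun ω => schauderInc 0 1 k ℓ * Y 0 1 ω +
      ∑ i ∈ Finset.Icc 1 ℓ, ∑ j ∈ Finset.Icc 1 (2 ^ (i - 1)), schauderInc i j k ℓ * Y i j ω) :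
    (∫ ω, V ω ∂P) = 0 ∧ variance V P = ((2 : ℝ) ^ ℓ)⁻¹ := by
  have hlaw : ∀ p ∈ validPairs ℓ,
      HasLaw (U p.1 p.2) (uniformOn (Dq (2 * (ℓ + 1 - p.1)) : Set ℝ)) P := fun p hp =>
    ⟨(hmeas _ _ (mem_validPairs.1 hp)).aemeasurable, hunif _ _ (mem_validPairs.1 hp)⟩
  set Z : ℕ × ℕ → Ω → ℝ := fun p ω => normalizedQuantile (2 * (ℓ + 1 - p.1)) (U p.1 p.2 ω)
  have hVZ : V = fun ω => ∑ p ∈ validPairs ℓ, schauderInc p.1 p.2 k ℓ * Z p ω := by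
    rw [hV]
    ext ω
    rw [sum_validPairs ℓ fun i j => schauderInc i j k ℓ * Z (i, j) ω]
    simp only [hY, Z, normalizedQuantile]
  have hind : (validPairs ℓ : Set (ℕ × ℕ)).Pairwise fun p p' => Z p ⟂ᵢ[P] Z p' := by
    intro p hp p' hp' hne
    show (normalizedQuantile _ ∘ U p.1 p.2) ⟂ᵢ[P] (normalizedQuantile _ ∘ U p'.1 p'.2)
    refine (hindep.indepFun (i := ⟨p, mem_validPairs.1 hp⟩) (j := ⟨p', mem_validPairs.1 hp'⟩)
      (by simpa using hne)).comp₀ (hlaw p hp).aemeasurable (hlaw p' hp').aemeasurable ?_ ?_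
    · exact (hlaw p hp).map_eq ▸ aemeasurable_uniformOn_finset _ _
    · exact (hlaw p' hp').map_eq ▸ aemeasurable_uniformOn_finset _ _
  have hvar : ∀ p ∈ validPairs ℓ, Var[Z p; P] = 1 := fun p hp =>
    (hlaw p hp).variance_normalizedQuantile (by have := mem_validPairs.1 hp; grind [ValidPair])
  refine ⟨?_, ?_⟩
  · rw [hVZ, integral_finsetSum _ fun p hp =>
      (memLp_one_iff_integrable.1 ((hlaw p hp).memLp_comp_uniformOn_finset _ 1)).const_mul _]
    exact sum_eq_zero fun p hp => by
      rw [integral_const_mul, (hlaw p hp).integral_normalizedQuantile, mul_zero]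
  · rw [hVZ, variance_sum_const_mul _
      (fun p hp => (hlaw p hp).memLp_comp_uniformOn_finset _ 2) hind,
      sum_congr rfl fun p hp => by rw [hvar p hp, mul_one],
      sum_validPairs ℓ fun i j => schauderInc i j k ℓ ^ 2]
    exact sum_sq_schauderInc hk1 hk2

/-- Lemma 1: the random bit increment `V_{k,ℓ}` has mean zero and variance exactly `2^{-ℓ}`. -/
theorem randomBitIncrement_mean_variance
    {Ω : Type*} [MeasurableSpace Ω] (P : Measure Ω) [IsProbabilityMeasure P]
    (ℓ k : ℕ) (hk1 : 1 ≤ k) (hk2 : k ≤ 2 ^ ℓ)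
    (U : ℕ → ℕ → Ω → ℝ)
    (hmeas : ∀ i j, ValidPair ℓ (i, j) → Measurable (U i j))
    (hunif : ∀ i j, ValidPair ℓ (i, j) →
      Measure.map (U i j) P = uniformOn (Dq (2 * (ℓ + 1 - i)) : Set ℝ))
    (hindep : iIndepFun
      (fun p : { p : ℕ × ℕ // ValidPair ℓ p } => U p.1.1 p.1.2) P)
    (Y : ℕ → ℕ → Ω → ℝ)
    (hY : ∀ i j, Y i j = fun ω => (sigmaq (2 * (ℓ + 1 - i)))⁻¹ * stdNormalCDFInv (U i j ω))
    (V : Ω → ℝ)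
    (hV : V = fun ω => schauderInc 0 1 k ℓ * Y 0 1 ω +
      ∑ i ∈ Finset.Icc 1 ℓ, ∑ j ∈ Finset.Icc 1 (2 ^ (i - 1)), schauderInc i j k ℓ * Y i j ω) :
    (∫ ω, V ω ∂P) = 0 ∧ variance V P = ((2 : ℝ) ^ ℓ)⁻¹ :=
  randomBitIncrement_mean_variance_general P ℓ k hk1 hk2 U hmeas hunif hindep Y hY V hV
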